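/- arXiv:cs/9811015 — 4 statements merged into one kernel-verified Lean document; each statement's English description precedes it below -/
import Mathlib

section
/- For any conjunctive type expression C = ω₁ ∧ ⋯ ∧ ωₘ ∧ ¬τ₁ ∧ ⋯ ∧ ¬τₙ (with m ≥ 1 positive type atoms), the denotation of C is empty if and only if for every function symbol f in the intersection of the principal-function-symbol sets F(ωᵢ) of all positive atoms, the sequence expression (⋀_{ω∈pos(C)} ⋁ A_ω^f) ∧ (⋀_{τ∈neg(C)} ¬(⋁ A_τ^f)) denotes the empty set of term sequences. -/
/-- Ground terms over a ranked alphabet `F` with arity function `ar`. -/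
inductive Tm (F : Type) (ar : F → ℕ) : Type
  | app : (f : F) → (Fin (ar f) → Tm F ar) → Tm F ar

/-- For a conjunctive type expression
`C = ω₁ ∧ ⋯ ∧ ωₘ ∧ ¬τ₁ ∧ ⋯ ∧ ¬τₙ` with at least one positive type atom, `⟦C⟧ = ∅`
iff for every function symbol `f ∈ ⋂_{ω ∈ pos(C)} F(ω)` (where
`F(α) = {f | A_α^f ≠ ∅}` is the set of principal function symbols of `⟦α⟧`), the
sequence expression
`(⋀_{ω∈pos(C)} ⋁ A_ω^f) ∧ (⋀_{τ∈neg(C)} ¬(⋁ A_τ^f))`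
denotes the empty set of term sequences.

Here `Atom` is the set of type atoms, `d` the denotation function (into sets of
ground terms over `F`, and into sets of argument sequences for the sequence
expressions, a sequence `⟨E₁,…,E_k⟩` denoting `⟦E₁⟧ × ⋯ × ⟦E_k⟧`), `A α f` the set
of argument sequences `⟨α₁,…,α_k⟩` with `(α → f(α₁,…,α_k)) ∈ ground(Δ)`, and
`hsem` states `⟦α⟧ = ⋃_{(α→f(E₁,…,Eₙ))∈ground(Δ)} {f(t₁,…,tₙ) | tᵢ ∈ ⟦Eᵢ⟧}` for
each atom `α` occurring in `C`. -/
theorem conj_empty_iff_seq_empty {F Atom : Type} [DecidableEq Atom] {ar : F → ℕ}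
    (d : Atom → Set (Tm F ar))
    (A : Atom → (f : F) → Set (Fin (ar f) → Atom))
    (pos neg : Finset Atom) (hpos : pos.Nonempty)
    (hsem : ∀ α ∈ pos ∪ neg, d α = ⋃ f : F, ⋃ args ∈ A α f,
      {t : Tm F ar | ∃ ts : Fin (ar f) → Tm F ar,
        (∀ i, ts i ∈ d (args i)) ∧ t = Tm.app f ts}) :
    ((⋂ ω ∈ pos, d ω) ∩ ⋂ τ ∈ neg, (d τ)ᶜ) = ∅ ↔
      ∀ f : F, (∀ ω ∈ pos, (A ω f).Nonempty) →
        ((⋂ ω ∈ pos, ⋃ args ∈ A ω f,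
            {ts : Fin (ar f) → Tm F ar | ∀ i, ts i ∈ d (args i)}) ∩
          ⋂ τ ∈ neg, (⋃ args ∈ A τ f,
            {ts : Fin (ar f) → Tm F ar | ∀ i, ts i ∈ d (args i)})ᶜ) = ∅ := by

  constructor
  · intro h f _hf
    rw [Set.eq_empty_iff_forall_notMem] at h ⊢
    rintro ts ⟨hp, hn⟩
    apply h (Tm.app f ts)
    simp only [Set.mem_inter_iff, Set.mem_iInter, Set.mem_compl_iff] at hp hn ⊢
    constructor
    · intro ω hω
      rw [hsem ω (Finset.mem_union_left _ hω)]
      have := hp ω hω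
      simp only [Set.mem_iUnion, Set.mem_setOf_eq] at this ⊢
      obtain ⟨args, hargs, hts⟩ := this
      exact ⟨f, args, hargs, ts, hts, rfl⟩
    · intro τ hτ ht
      rw [hsem τ (Finset.mem_union_right _ hτ)] at ht
      simp only [Set.mem_iUnion, Set.mem_setOf_eq] at ht
      obtain ⟨g, args, hargs, ts', hts', heq⟩ := ht
      injection heq with hfg hts2
      subst hfg
      have hts3 := eq_of_heq hts2
      subst hts3
      exact hn τ hτ (Set.mem_iUnion₂.mpr ⟨args, hargs, hts'⟩)
  · intro h
    rw [Set.eq_empty_iff_forall_notMem]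
    intro t ⟨hp, hn⟩
    obtain ⟨f, ts⟩ := t
    simp only [Set.mem_iInter, Set.mem_compl_iff] at hp hn
    have key : ∀ ω ∈ pos, ∃ args ∈ A ω f, ∀ i, ts i ∈ d (args i) := by
      intro ω hω
      have := hp ω hω
      rw [hsem ω (Finset.mem_union_left _ hω)] at this
      simp only [Set.mem_iUnion, Set.mem_setOf_eq] at this
      obtain ⟨g, args, hargs, ts', hts', heq⟩ := this
      injection heq with hfg hts2
      subst hfg
      have hts3 := eq_of_heq hts2
      subst hts3
      exact ⟨args, hargs, hts'⟩
    have hne : ∀ ω ∈ pos, (A ω f).Nonempty := fun ω hω =>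
      let ⟨args, hargs, _⟩ := key ω hω; ⟨args, hargs⟩
    have hmem : ts ∈ ((⋂ ω ∈ pos, ⋃ args ∈ A ω f,
        {ts : Fin (ar f) → Tm F ar | ∀ i, ts i ∈ d (args i)}) ∩
        ⋂ τ ∈ neg, (⋃ args ∈ A τ f,
        {ts : Fin (ar f) → Tm F ar | ∀ i, ts i ∈ d (args i)})ᶜ) := by
      constructor
      · simp only [Set.mem_iInter]
        intro ω hω
        obtain ⟨args, hargs, hts⟩ := key ω hω
        exact Set.mem_iUnion₂.mpr ⟨args, hargs, hts⟩
      · simp only [Set.mem_iInter, Set.mem_compl_iff]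
        intro τ hτ hts
        apply hn τ hτ
        rw [hsem τ (Finset.mem_union_right _ hτ)]
        obtain ⟨args, hargs, hts'⟩ := Set.mem_iUnion₂.mp hts
        simp only [Set.mem_iUnion, Set.mem_setOf_eq]
        exact ⟨f, args, hargs, ts, hts', rfl⟩
    rw [h f hne] at hmem
    exact hmem
end

section
/- The function push, which rewrites the negation of a union of sequences ¬(⋁ᵢ γᵢ) into ⋀ᵢ push(¬γᵢ), rewrites ¬⟨E₁,…,E_k⟩ (k ≥ 1) into ⋁_{l=1}^{k} ⟨⊤,…,⊤, ¬E_l, ⊤,…,⊤⟩ (with ¬E_l in position l), and rewrites ¬ε into Λ, preserves semantics: ⟦push(¬(⋁ A_τ^f))⟧ = ⟦¬(⋁ A_τ^f)⟧ for every type atom τ and function symbol f. -/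
/-- The function `push` — which rewrites `¬(⋁ᵢ γᵢ)` into
`⋀ᵢ push(¬γᵢ)`, rewrites `¬⟨E₁,…,E_k⟩` (k ≥ 1) into
`⋁_{l=1}^{k} ⟨⊤,…,⊤, ¬E_l, ⊤,…,⊤⟩` (with `¬E_l` in position `l`), and rewrites
`¬ε` into `Λ` — preserves semantics:
`⟦push(¬(⋁ A_τ^f))⟧ = ⟦¬(⋁ A_τ^f)⟧` for every type atom `τ` and function symbol
`f` of arity `k = ar f`.

Here `T` is the set of ground terms, `d` the denotation of type expressions,
`A τ f` the (finite) set of argument sequences (of length `ar f`) from the ground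
rules `τ → f(α₁,…,α_k)`.  A sequence of length `k` denotes a subset of `T^k`
(the Cartesian product of the component denotations, `⊤` denoting `T` and `¬E_l`
denoting `(d E_l)ᶜ`), `∧`/`∨`/`¬` on sequence expressions denote intersection,
union, and complement relative to `T^k`, and `Λ` denotes `∅` — for `k = 0` the
disjunction `⋃ l : Fin 0, …` below is indeed the empty set, i.e. `⟦Λ⟧`.
The left-hand side is the denotation of `push(¬(⋁ A_τ^f))`, the right-hand side
that of `¬(⋁ A_τ^f)`. -/
theorem push_preserves_semantics {F Atom T : Type} {ar : F → ℕ}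
    (d : Atom → Set T) (A : Atom → (f : F) → Set (Fin (ar f) → Atom))
    (τ : Atom) (f : F) (hfin : (A τ f).Finite) :
    (⋂ args ∈ A τ f, ⋃ l : Fin (ar f),
        {ts : Fin (ar f) → T | (∀ i, i ≠ l → ts i ∈ Set.univ) ∧
          ts l ∈ (d (args l))ᶜ}) =
      (⋃ args ∈ A τ f, {ts : Fin (ar f) → T | ∀ i, ts i ∈ d (args i)})ᶜ := by
  ext ts
  simp only [Set.mem_iInter, Set.mem_iUnion, Set.mem_setOf_eq, Set.mem_compl_iff,
    Set.mem_univ, not_exists]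
  constructor
  · intro h args hargs hall
    obtain ⟨l, _, hl⟩ := h args hargs
    exact hl (hall l)
  · intro h args hargs
    by_contra hc
    push_neg at hc
    exact h args hargs fun i => hc i (fun _ _ => trivial)
end

section
/- The set rta(E₀) of type atoms relevant to a type expression E₀ — the smallest set containing all top-level type atoms of E₀ and closed under: if τ ∈ rta(E₀) and τ → f(τ₁,…,τ_k) ∈ ground(Δ) then all top-level type atoms of each τᵢ are in rta(E₀) — is finite. -/
/-- Type expressions over type constructors `C`, built from constructors, `⊤`,
`⊥` and the set operators `∧`, `∨`, `¬`. -/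
inductive TE (C : Type) : Type
  | top : TE C
  | bot : TE C
  | con : C → List (TE C) → TE C
  | and : TE C → TE C → TE C
  | or : TE C → TE C → TE C
  | not : TE C → TE C

/-- An argument of the right-hand side of a simplified type rule: a type
parameter `ζᵢ` or a constructor applied to type parameters `d(ζ'₁,…,ζ'_k)`. -/
inductive Arg (C : Type) : Type
  | param : ℕ → Arg C
  | con : C → List ℕ → Arg C

/-- A simplified parametric type rule `c(ζ₁,…,ζₘ) → f(τ₁,…,τₙ)`. -/
structure Rule (C F : Type) where
  c : C
  f : F
  args : List (Arg C)

/-- Instantiation of a rule argument under a type valuation `Es`. -/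
def substArg {C : Type} (a : Arg C) (Es : List (TE C)) : TE C :=
  match a with
  | .param i => Es.getD i .top
  | .con d is => .con d (is.map fun i => Es.getD i .top)

/-- The set of top-level type atoms of a type expression: the type atoms (type
expressions whose principal constructor is not a set operator) not occurring as a
proper subterm of another type atom. -/
def tlta {C : Type} : TE C → Set (TE C)
  | .and a b => tlta a ∪ tlta b
  | .or a b => tlta a ∪ tlta b
  | .not a => tlta a
  | .top => {.top}
  | .bot => {.bot}
  | .con c Es => {.con c Es}

/-- `Rta Δ E₀` is the set `rta(E₀)` of type atoms relevant to `E₀`: the smallest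
set containing all top-level type atoms of `E₀` and closed under: if
`τ ∈ rta(E₀)` and `τ → f(τ₁,…,τ_k) ∈ ground(Δ)` then all top-level type atoms of
each `τᵢ` belong to `rta(E₀)`.  A ground instance of a rule of `Δ` with left-hand
side the atom `c(Es)` has as right-hand side arguments the instantiations
`substArg arg Es` of the rule's arguments.  (The additional ground rules
`⊤ → f(⊤,…,⊤)` only contribute the atom `⊤` itself, hence are already covered.) -/
inductive Rta {C F : Type} (Δ : List (Rule C F)) (E₀ : TE C) : TE C → Prop
  | base {a : TE C} : a ∈ tlta E₀ → Rta Δ E₀ a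
  | step {c : C} {Es : List (TE C)} {r : Rule C F} {arg : Arg C} {a : TE C} :
      Rta Δ E₀ (.con c Es) → r ∈ Δ → r.c = c → arg ∈ r.args →
      a ∈ tlta (substArg arg Es) → Rta Δ E₀ a

def subL {C : Type} : TE C → List (TE C)
  | .top => [.top]
  | .bot => [.bot]
  | .con c Es => .con c Es :: Es.attach.flatMap (fun ⟨e, _⟩ => subL e)
  | .and a b => .and a b :: (subL a ++ subL b)
  | .or a b => .or a b :: (subL a ++ subL b)
  | .not a => .not a :: subL a

theorem self_mem_subL {C : Type} (E : TE C) : E ∈ subL E := by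
  cases E <;> simp [subL]

theorem tlta_subset_subL {C : Type} : ∀ (E : TE C), ∀ a ∈ tlta E, a ∈ subL E
  | .top => by simp [tlta, subL]
  | .bot => by simp [tlta, subL]
  | .con c Es => by simp [tlta, subL]
  | .and a b => by
      intro x hx; rcases hx with h | h <;> simp [subL]
      · exact Or.inr (Or.inl (tlta_subset_subL a x h))
      · exact Or.inr (Or.inr (tlta_subset_subL b x h))
  | .or a b => by
      intro x hx; rcases hx with h | h <;> simp [subL]
      · exact Or.inr (Or.inl (tlta_subset_subL a x h))
      · exact Or.inr (Or.inr (tlta_subset_subL b x h))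
  | .not a => by
      intro x hx; simp [subL]; exact Or.inr (tlta_subset_subL a x hx)

theorem subL_trans {C : Type} : ∀ (z y : TE C), y ∈ subL z → ∀ x ∈ subL y, x ∈ subL z
  | .top, y, hy => by simp [subL] at hy; subst hy; exact fun x hx => hx
  | .bot, y, hy => by simp [subL] at hy; subst hy; exact fun x hx => hx
  | .con c Es, y, hy => by
      intro x hx
      simp [subL] at hy ⊢
      rcases hy with rfl | ⟨e, he, hye⟩
      · simpa [subL] using hx
      · have := List.sizeOf_lt_of_mem he
        exact Or.inr ⟨e, he, subL_trans e y hye x hx⟩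
  | .and a b, y, hy => by
      intro x hx
      simp [subL] at hy ⊢
      rcases hy with rfl | hy | hy
      · simpa [subL] using hx
      · exact Or.inr (Or.inl (subL_trans a y hy x hx))
      · exact Or.inr (Or.inr (subL_trans b y hy x hx))
  | .or a b, y, hy => by
      intro x hx
      simp [subL] at hy ⊢
      rcases hy with rfl | hy | hy
      · simpa [subL] using hx
      · exact Or.inr (Or.inl (subL_trans a y hy x hx))
      · exact Or.inr (Or.inr (subL_trans b y hy x hx))
  | .not a, y, hy => by
      intro x hx
      simp [subL] at hy ⊢
      rcases hy with rfl | hy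
      · simpa [subL] using hx
      · exact Or.inr (subL_trans a y hy x hx)
termination_by z => z
decreasing_by all_goals first | (simp_wf; omega) | (simp_wf; have := List.sizeOf_lt_of_mem he; omega) | simp_wf

theorem mem_subL_con {C : Type} {c : C} {Es : List (TE C)} {e : TE C} (he : e ∈ Es) :
    e ∈ subL (TE.con c Es) := by
  simp [subL]
  exact Or.inr ⟨e, he, self_mem_subL e⟩

theorem getD_mem_or_eq {α : Type*} (l : List α) (i : ℕ) (d : α) :
    l.getD i d ∈ l ∨ l.getD i d = d := by
  rcases lt_or_ge i l.length with h | h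
  · left; rw [List.getD_eq_getElem l d h]; exact List.getElem_mem h
  · right; exact List.getD_eq_default l d h

/-- bound on rhs constructor arities occurring in Δ -/
def argLen {C : Type} : Arg C → ℕ
  | .param _ => 0
  | .con _ is => is.length

def maxArity {C F : Type} (Δ : List (Rule C F)) : ℕ :=
  (Δ.flatMap fun r => r.args.map argLen).foldr max 0

theorem le_maxArity {C F : Type} {Δ : List (Rule C F)} {r : Rule C F} {d : C} {is : List ℕ}
    (hr : r ∈ Δ) (ha : Arg.con d is ∈ r.args) : is.length ≤ maxArity Δ := by
  have hmem : is.length ∈ Δ.flatMap fun r => r.args.map argLen := by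
    simp only [List.mem_flatMap, List.mem_map]
    exact ⟨r, hr, Arg.con d is, ha, rfl⟩
  have : ∀ (l : List ℕ) (n : ℕ), n ∈ l → n ≤ l.foldr max 0 := by
    intro l
    induction l with
    | nil => simp
    | cons a l ih =>
        intro n hn
        rcases List.mem_cons.mp hn with rfl | hn
        · exact le_max_left _ _
        · exact le_trans (ih n hn) (le_max_right _ _)
  exact this _ _ hmem


/-- With `Σ = F` and `Π = C` finite and `Δ` a finite simplified set
of type-preserving production rules, the set `rta(E₀)` of type atoms relevant to
a type expression `E₀` is finite. -/
theorem rta_finite {C F : Type} [Finite C] [Finite F]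
    (Δ : List (Rule C F)) (E₀ : TE C) :
    {a : TE C | Rta Δ E₀ a}.Finite := by
  set N := maxArity Δ with hN
  set s : Set (TE C) := {x | x ∈ subL E₀ ∨ x = .top} with hs
  have hsfin : s.Finite := ((subL E₀).finite_toSet.union (Set.finite_singleton (.top : TE C))).subset
    (by rintro x (h | h); exacts [Or.inl h, Or.inr h])
  set T : Set (TE C) := s ∪ {te | ∃ d L, te = .con d L ∧ L.length ≤ N ∧ ∀ x ∈ L, x ∈ s} with hT
  have hTfin : T.Finite := by
    apply hsfin.union
    have : Finite ↥s := hsfin.to_subtype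
    have hL : {L : List (TE C) | L.length ≤ N ∧ ∀ x ∈ L, x ∈ s}.Finite := by
      have h1 : {l : List ↥s | l.length ≤ N}.Finite := List.finite_length_le _ N
      have h2 := h1.image (List.map (Subtype.val : ↥s → TE C))
      apply h2.subset
      intro L ⟨hlen, hmem⟩
      refine ⟨L.attach.map fun ⟨x, hx⟩ => ⟨x, hmem x hx⟩, by simpa using hlen, ?_⟩
      simp
    have h3 := (Set.Finite.prod (Set.finite_univ (α := C)) hL).image
      (fun p : C × List (TE C) => TE.con p.1 p.2)
    apply h3.subset
    rintro te ⟨d, L, rfl, hlen, hmem⟩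
    exact ⟨(d, L), ⟨trivial, hlen, hmem⟩, rfl⟩
  apply hTfin.subset
  intro a ha
  simp only [Set.mem_setOf_eq] at ha
  induction ha with
  | base h =>
      exact Or.inl (Or.inl (tlta_subset_subL E₀ _ h))
  | @step c Es r arg a hrta hr hc harg htl ih =>
      -- elements of Es lie in s
      have hEs : ∀ e ∈ Es, e ∈ s := by
        rcases ih with h | ⟨d, L, hEq, _, hmem⟩
        · rcases h with h | h
          · intro e he
            exact Or.inl (subL_trans E₀ _ h e (mem_subL_con he))
          · cases h
        · cases hEq
          exact hmem
      have hgetD : ∀ i, Es.getD i .top ∈ s := by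
        intro i
        rcases getD_mem_or_eq Es i .top with h | h
        · exact hEs _ h
        · exact Or.inr h
      cases arg with
      | param i =>
          simp only [substArg] at htl
          rcases hgetD i with h | h
          · exact Or.inl (Or.inl (subL_trans E₀ _ h a (tlta_subset_subL _ a htl)))
          · rw [h] at htl
            simp only [tlta, Set.mem_singleton_iff] at htl
            subst htl
            exact Or.inl (Or.inr rfl)
      | con d is =>
          simp only [substArg, tlta, Set.mem_singleton_iff] at htl
          subst htl
          refine Or.inr ⟨d, _, rfl, ?_, ?_⟩
          · simpa using le_maxArity hr harg
          · intro x hx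
            simp only [List.mem_map] at hx
            obtain ⟨i, _, rfl⟩ := hx
            exact hgetD i
end

section
/- With type definitions α → g(ω); β → g(θ) | g(σ); θ → a | h(θ,ζ); σ → b | h(σ,η); ω → a | b | h(ω,ζ) | h(ω,η); ζ → a; η → b, the term t = g(h(h(a,b),a)) satisfies t ∈ ⟦α⟧ and t ∉ ⟦β⟧; hence ⟦α⟧ ⊄ ⟦β⟧, i.e., ⟦α ∧ ¬β⟧ ≠ ∅. -/
/-- Ground terms over Σ = {a, b, g(·), h(·,·)}. -/
inductive Tm18 : Type
  | a : Tm18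
  | b : Tm18
  | g : Tm18 → Tm18
  | h : Tm18 → Tm18 → Tm18

/-- ⟦ζ⟧ for the rule ζ → a. -/
inductive Pζ : Tm18 → Prop
  | a : Pζ .a

/-- ⟦η⟧ for the rule η → b. -/
inductive Pη : Tm18 → Prop
  | b : Pη .b

/-- ⟦θ⟧ : least set for θ → a | h(θ,ζ). -/
inductive Pθ : Tm18 → Prop
  | a : Pθ .a
  | h {t u : Tm18} : Pθ t → Pζ u → Pθ (.h t u)

/-- ⟦σ⟧ : least set for σ → b | h(σ,η). -/
inductive Pσ : Tm18 → Prop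
  | b : Pσ .b
  | h {t u : Tm18} : Pσ t → Pη u → Pσ (.h t u)

/-- ⟦ω⟧ : least set for ω → a | b | h(ω,ζ) | h(ω,η). -/
inductive Pω : Tm18 → Prop
  | a : Pω .a
  | b : Pω .b
  | hζ {t u : Tm18} : Pω t → Pζ u → Pω (.h t u)
  | hη {t u : Tm18} : Pω t → Pη u → Pω (.h t u)

/-- ⟦α⟧ : least set for α → g(ω). -/
inductive Pα : Tm18 → Prop
  | g {t : Tm18} : Pω t → Pα (.g t)

/-- ⟦β⟧ : least set for β → g(θ) | g(σ). -/
inductive Pβ : Tm18 → Prop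
  | gθ {t : Tm18} : Pθ t → Pβ (.g t)
  | gσ {t : Tm18} : Pσ t → Pβ (.g t)

/-- With the type definitions α → g(ω); β → g(θ) | g(σ);
θ → a | h(θ,ζ); σ → b | h(σ,η); ω → a | b | h(ω,ζ) | h(ω,η); ζ → a; η → b, the
term `t = g(h(h(a,b),a))` satisfies `t ∈ ⟦α⟧` and `t ∉ ⟦β⟧`; hence
`⟦α⟧ ⊄ ⟦β⟧`, i.e. `⟦α ∧ ¬β⟧ = ⟦α⟧ ∩ ⟦β⟧ᶜ ≠ ∅`. -/
theorem dart_zobel_counterexample :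
    Pα (.g (.h (.h .a .b) .a)) ∧ ¬ Pβ (.g (.h (.h .a .b) .a)) ∧
      ¬ ({t : Tm18 | Pα t} ⊆ {t | Pβ t}) ∧
      {t : Tm18 | Pα t} ∩ {t | Pβ t}ᶜ ≠ ∅ := by
  have hA : Pα (.g (.h (.h .a .b) .a)) :=
    .g (.hζ (.hη .a .b) .a)
  have hB : ¬ Pβ (.g (.h (.h .a .b) .a)) := by
    rintro (⟨h⟩ | ⟨h⟩)
    · rcases h with _ | ⟨ht, -⟩
      rcases ht with _ | ⟨-, hz⟩; cases hz
    · rcases h with _ | ⟨-, he⟩; cases he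
  refine ⟨hA, hB, fun hsub => hB (hsub hA), fun h => ?_⟩
  exact Set.eq_empty_iff_forall_notMem.mp h _ ⟨hA, hB⟩
end
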